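/- Let A be an MV-algebra. The map φ_A : A → [0, u] ⊆ G_A sending a to the class [(a),(0)], where (a) is the good sequence (a, 0, 0, …), is an isomorphism of MV-algebras between A and the unit interval MV-algebra of the ℓ-group with strong unit G_A associated to A. -/

import Mathlib

class MVAlgebra (A : Type*) extends Zero A where
  oplus : A → A → A
  mvneg : A → A
  oplus_assoc : ∀ x y z : A, oplus x (oplus y z) = oplus (oplus x y) z
  oplus_comm : ∀ x y : A, oplus x y = oplus y x
  oplus_zero : ∀ x : A, oplus x 0 = x
  mvneg_mvneg : ∀ x : A, mvneg (mvneg x) = x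
  oplus_mvneg_zero : ∀ x : A, oplus x (mvneg 0) = mvneg 0
  lukasiewicz : ∀ x y : A,
    oplus (mvneg (oplus (mvneg x) y)) y = oplus (mvneg (oplus (mvneg y) x)) x

open MVAlgebra

/-- The derived operation `x ⊙ y := ¬(¬x ⊕ ¬y)`. -/
def MVAlgebra.odot {A : Type*} [MVAlgebra A] (x y : A) : A :=
  mvneg (oplus (mvneg x) (mvneg y))

/-- A good sequence: `aᵢ ⊕ aᵢ₊₁ = aᵢ` for all `i`, and eventually zero. -/
def Good {A : Type*} [MVAlgebra A] (a : ℕ → A) : Prop :=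
  (∀ i, oplus (a i) (a (i + 1)) = a i) ∧ ∃ N, ∀ m, N ≤ m → a m = 0

/-- The sum of (good) sequences:
`(a + b)ₙ = aₙ ⊕ (aₙ₋₁ ⊙ b₀) ⊕ … ⊕ (a₀ ⊙ bₙ₋₁) ⊕ bₙ`. -/
def addGood {A : Type*} [MVAlgebra A] (a b : ℕ → A) : ℕ → A := fun n =>
  ((List.range n).map (fun j => odot (a (n - 1 - j)) (b j))).foldr oplus
    (oplus (a n) (b n))

/-- The natural order of an MV-algebra: `x ≤ y` iff `¬x ⊕ y = ¬0`. -/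
def MVLe {A : Type*} [MVAlgebra A] (x y : A) : Prop :=
  oplus (mvneg x) y = mvneg 0

/-- The lattice infimum for the natural order: `inf(x,y) = x ⊙ (¬x ⊕ y)`. -/
def MVInf {A : Type*} [MVAlgebra A] (x y : A) : A := odot x (oplus (mvneg x) y)

/-- Pointwise order on sequences. -/
def SeqLe {A : Type*} [MVAlgebra A] (a b : ℕ → A) : Prop :=
  ∀ i, MVLe (a i) (b i)

/-- The zero good sequence. -/
def zeroSeq (A : Type*) [MVAlgebra A] : ℕ → A := fun _ => 0

/-- The good sequence `(1) = (¬0, 0, 0, …)`. -/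
def oneSeq (A : Type*) [MVAlgebra A] : ℕ → A := fun i =>
  if i = 0 then mvneg 0 else 0

/-- The good sequence `(a) = (a, 0, 0, …)`. -/
def single {A : Type*} [MVAlgebra A] (a : A) : ℕ → A := fun i =>
  if i = 0 then a else 0

/-- Equality in the Grothendieck group `G_A`, on representing pairs:
`[a,b] = [c,d]` iff `a + d = c + b`. -/
def PairEq {A : Type*} [MVAlgebra A] (p q : (ℕ → A) × (ℕ → A)) : Prop :=
  addGood p.1 q.2 = addGood q.1 p.2

/-- The order on `G_A` on representing pairs: `[a,b] ≤ [c,d]` iff `a + d ≤ c + b`. -/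
def PairLe {A : Type*} [MVAlgebra A] (p q : (ℕ → A) × (ℕ → A)) : Prop :=
  SeqLe (addGood p.1 q.2) (addGood q.1 p.2)

/-- Addition in `G_A` on representing pairs. -/
def pairAdd {A : Type*} [MVAlgebra A] (p q : (ℕ → A) × (ℕ → A)) :
    (ℕ → A) × (ℕ → A) :=
  (addGood p.1 q.1, addGood p.2 q.2)

/-- The lattice infimum in `G_A` on representing pairs:
`inf([a,b],[c,d]) = [inf(a+d, c+b), b+d]` (with componentwise `inf`). -/
def pairInf {A : Type*} [MVAlgebra A] (p q : (ℕ → A) × (ℕ → A)) :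
    (ℕ → A) × (ℕ → A) :=
  (fun i => MVInf (addGood p.1 q.2 i) (addGood q.1 p.2 i), addGood p.2 q.2)

/-! Everything except surjectivity is a computation with sequences of length at most two, e.g.
`(¬a) + (a) = (¬a ⊕ a, ¬a ⊙ a, 0, …) = (1)`. For surjectivity, `0 ≤ [x,y] ≤ u` means
`yᵢ ≤ xᵢ` and `xₙ₊₁ ≤ yₙ`, and an `a` with `x = (a) + y` is built by induction on the length
of `y`: if `a'` works for the shifted pair `(x₁, x₂, …), (y₁, y₂, …)`, then `a = (x₀ ⊙ ¬y₀) ⊕ a'`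
works for `x, y`. -/

local infixl:65 " ⊕ₘ " => MVAlgebra.oplus
local infixl:70 " ⊙ₘ " => MVAlgebra.odot
local prefix:max "¬ₘ" => MVAlgebra.mvneg
local infix:50 " ≤ₘ " => MVLe

namespace MVAlgebra

variable {A : Type*} [MVAlgebra A]

theorem zero_oplus (x : A) : 0 ⊕ₘ x = x := by
  rw [oplus_comm, oplus_zero]

theorem mvneg_zero_oplus (x : A) : ¬ₘ0 ⊕ₘ x = ¬ₘ0 := by
  rw [oplus_comm, oplus_mvneg_zero]

theorem mvneg_oplus_self (x : A) : ¬ₘx ⊕ₘ x = ¬ₘ0 := by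
  simpa only [mvneg_mvneg, zero_oplus, oplus_mvneg_zero] using lukasiewicz (¬ₘ(0 : A)) x

theorem mvneg_injective : Function.Injective (mvneg : A → A) :=
  Function.LeftInverse.injective mvneg_mvneg

theorem mvneg_odot (x y : A) : ¬ₘ(x ⊙ₘ y) = ¬ₘx ⊕ₘ ¬ₘy :=
  mvneg_mvneg _

theorem odot_comm (x y : A) : x ⊙ₘ y = y ⊙ₘ x := by
  rw [odot, odot, oplus_comm]

theorem odot_assoc (x y z : A) : x ⊙ₘ (y ⊙ₘ z) = x ⊙ₘ y ⊙ₘ z := by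
  simp only [odot, mvneg_mvneg, oplus_assoc]

theorem odot_zero (x : A) : x ⊙ₘ 0 = 0 := by
  rw [odot, oplus_mvneg_zero, mvneg_mvneg]

theorem zero_odot (x : A) : 0 ⊙ₘ x = 0 := by
  rw [odot_comm, odot_zero]

theorem odot_mvneg_zero (x : A) : x ⊙ₘ ¬ₘ0 = x := by
  rw [odot, mvneg_mvneg, oplus_zero, mvneg_mvneg]

theorem mvneg_zero_odot (x : A) : ¬ₘ0 ⊙ₘ x = x := by
  rw [odot_comm, odot_mvneg_zero]

theorem mvneg_odot_self (x : A) : ¬ₘx ⊙ₘ x = 0 := by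
  rw [odot, mvneg_mvneg, oplus_comm, mvneg_oplus_self, mvneg_mvneg]

theorem odot_mvneg_odot_self (x y : A) : x ⊙ₘ ¬ₘy ⊙ₘ y = 0 := by
  rw [← odot_assoc, mvneg_odot_self, odot_zero]

theorem foldr_oplus_of_forall_eq_zero {l : List A} (h : ∀ t ∈ l, t = 0) (init : A) :
    l.foldr oplus init = init := by
  induction l with
  | nil => rfl
  | cons t l ih =>
    rw [List.foldr_cons, h t List.mem_cons_self,
      ih fun s hs => h s (List.mem_cons_of_mem t hs), zero_oplus]

theorem mvLe_oplus_right (x z : A) : x ≤ₘ x ⊕ₘ z := by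
  rw [MVLe, oplus_assoc, mvneg_oplus_self, mvneg_zero_oplus]

theorem mvLe_oplus_left (x z : A) : x ≤ₘ z ⊕ₘ x :=
  oplus_comm x z ▸ mvLe_oplus_right x z

theorem mvLe_iff_exists_oplus {x y : A} : x ≤ₘ y ↔ ∃ z, y = x ⊕ₘ z := by
  refine ⟨fun h => ⟨¬ₘ(¬ₘy ⊕ₘ x), ?_⟩, fun ⟨z, hz⟩ => hz ▸ mvLe_oplus_right x z⟩
  have hl := lukasiewicz x y
  rw [show ¬ₘx ⊕ₘ y = ¬ₘ0 from h, mvneg_mvneg, zero_oplus] at hl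
  rw [oplus_comm]
  exact hl

theorem mvLe_refl (x : A) : x ≤ₘ x :=
  mvneg_oplus_self x

theorem zero_mvLe (x : A) : 0 ≤ₘ x :=
  mvneg_zero_oplus x

theorem mvLe_mvneg_zero (x : A) : x ≤ₘ ¬ₘ0 :=
  oplus_mvneg_zero _

theorem mvLe_trans {x y z : A} (hxy : x ≤ₘ y) (hyz : y ≤ₘ z) : x ≤ₘ z := by
  rw [mvLe_iff_exists_oplus] at hxy hyz ⊢
  obtain ⟨s, rfl⟩ := hxy
  obtain ⟨t, rfl⟩ := hyz
  exact ⟨s ⊕ₘ t, (oplus_assoc x s t).symm⟩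

theorem mvLe_antisymm {x y : A} (hxy : x ≤ₘ y) (hyx : y ≤ₘ x) : x = y := by
  have hl := lukasiewicz x y
  rwa [show ¬ₘx ⊕ₘ y = ¬ₘ0 from hxy, show ¬ₘy ⊕ₘ x = ¬ₘ0 from hyx, mvneg_mvneg, zero_oplus,
    zero_oplus, eq_comm] at hl

theorem eq_zero_of_mvLe_zero {x : A} (h : x ≤ₘ 0) : x = 0 :=
  mvLe_antisymm h (zero_mvLe x)

theorem oplus_mvLe_oplus_left {x y : A} (h : x ≤ₘ y) (z : A) : x ⊕ₘ z ≤ₘ y ⊕ₘ z := by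
  obtain ⟨s, rfl⟩ := mvLe_iff_exists_oplus.mp h
  rw [mvLe_iff_exists_oplus]
  exact ⟨s, by rw [← oplus_assoc, oplus_comm s z, oplus_assoc]⟩

theorem oplus_mvLe_oplus_right {x y : A} (h : x ≤ₘ y) (z : A) : z ⊕ₘ x ≤ₘ z ⊕ₘ y := by
  rw [oplus_comm z x, oplus_comm z y]
  exact oplus_mvLe_oplus_left h z

theorem oplus_mvLe_oplus {x y z w : A} (hxy : x ≤ₘ y) (hzw : z ≤ₘ w) : x ⊕ₘ z ≤ₘ y ⊕ₘ w :=
  mvLe_trans (oplus_mvLe_oplus_left hxy z) (oplus_mvLe_oplus_right hzw y)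

theorem mvneg_mvLe_mvneg {x y : A} (h : x ≤ₘ y) : ¬ₘy ≤ₘ ¬ₘx := by
  rw [MVLe, mvneg_mvneg, oplus_comm]
  exact h

theorem odot_mvLe_odot_left {x y : A} (h : x ≤ₘ y) (z : A) : x ⊙ₘ z ≤ₘ y ⊙ₘ z :=
  mvneg_mvLe_mvneg (oplus_mvLe_oplus_left (mvneg_mvLe_mvneg h) ¬ₘz)

theorem odot_mvLe_odot_right {x y : A} (h : x ≤ₘ y) (z : A) : z ⊙ₘ x ≤ₘ z ⊙ₘ y := by
  rw [odot_comm z x, odot_comm z y]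
  exact odot_mvLe_odot_left h z

theorem odot_mvLe_right (x y : A) : x ⊙ₘ y ≤ₘ y :=
  by simpa only [mvneg_zero_odot] using odot_mvLe_odot_left (mvLe_mvneg_zero x) y

theorem odot_eq_zero_of_mvLe {d y z : A} (hdy : d ⊙ₘ y = 0) (hzy : z ≤ₘ y) : d ⊙ₘ z = 0 :=
  eq_zero_of_mvLe_zero (hdy ▸ odot_mvLe_odot_right hzy d)

theorem oplus_eq_self_of_mvLe {x y z : A} (hxy : x ⊕ₘ y = x) (hzy : z ≤ₘ y) : x ⊕ₘ z = x := by
  have hle := oplus_mvLe_oplus_right hzy x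
  rw [hxy] at hle
  exact mvLe_antisymm hle (mvLe_oplus_right x z)

theorem odot_eq_zero_iff {x y : A} : x ⊙ₘ y = 0 ↔ x ≤ₘ ¬ₘy := by
  rw [MVLe, ← mvneg_odot, mvneg_injective.eq_iff]

theorem odot_mvneg_oplus_of_mvLe {x y : A} (h : y ≤ₘ x) : x ⊙ₘ ¬ₘy ⊕ₘ y = x := by
  rw [odot, mvneg_mvneg, lukasiewicz, show ¬ₘy ⊕ₘ x = ¬ₘ0 from h, mvneg_mvneg, zero_oplus]

theorem mvInf_comm (x y : A) : MVInf x y = MVInf y x := by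
  have hl := lukasiewicz ¬ₘy ¬ₘx
  rw [mvneg_mvneg, mvneg_mvneg, oplus_comm y, oplus_comm x] at hl
  rw [MVInf, MVInf, odot, odot, oplus_comm ¬ₘx, oplus_comm ¬ₘy, hl]

theorem mvInf_mvLe_right (x y : A) : MVInf x y ≤ₘ y := by
  rw [MVInf, MVLe, mvneg_odot, oplus_comm ¬ₘx, ← oplus_assoc, mvneg_oplus_self]

theorem mvInf_eq_right_of_mvLe {x y : A} (h : y ≤ₘ x) : MVInf x y = y := by
  rw [mvInf_comm, MVInf, show ¬ₘy ⊕ₘ x = ¬ₘ0 from h, odot_mvneg_zero]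

theorem zero_mvInf (x : A) : MVInf 0 x = 0 :=
  zero_odot _

theorem odot_mvLe_of_mvLe_mvneg_oplus {x y z : A} (h : x ≤ₘ ¬ₘy ⊕ₘ z) : x ⊙ₘ y ≤ₘ z := by
  have hle := odot_mvLe_odot_left h y
  rw [odot_comm (¬ₘy ⊕ₘ z) y] at hle
  exact mvLe_trans hle (mvInf_mvLe_right y z)

theorem odot_eq_self_of_oplus_eq_self {u v : A} (h : u ⊕ₘ v = u) : v ⊙ₘ u = v := by
  have hvu : v ≤ₘ u := h ▸ mvLe_oplus_left v u
  have hl := lukasiewicz v ¬ₘu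
  rw [mvneg_mvneg] at hl
  have hvu_oplus : v ⊙ₘ u ⊕ₘ ¬ₘu = ¬ₘu ⊕ₘ v := by
    rw [odot, hl, h]
  have hinf : MVInf u (v ⊙ₘ u) = MVInf u v := by
    rw [MVInf, MVInf, oplus_comm ¬ₘu (v ⊙ₘ u), hvu_oplus]
  rwa [mvInf_eq_right_of_mvLe (odot_mvLe_right v u), mvInf_eq_right_of_mvLe hvu] at hinf

theorem oplus_odot_mvneg_of_odot_eq_zero {x y : A} (h : x ⊙ₘ y = 0) : (x ⊕ₘ y) ⊙ₘ ¬ₘy = x := by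
  have hl := lukasiewicz ¬ₘx y
  rw [mvneg_mvneg, show ¬ₘ(¬ₘy ⊕ₘ ¬ₘx) = 0 from (odot_comm y x).trans h, zero_oplus] at hl
  rw [odot, mvneg_mvneg, hl, mvneg_mvneg]

theorem oplus_odot_of_odot_eq_zero {d a y : A} (hda : d ⊙ₘ a = 0) (hdy : d ⊙ₘ y = 0) :
    (d ⊕ₘ a) ⊙ₘ y = a ⊙ₘ (d ⊕ₘ y) := by
  have hy : (y ⊕ₘ d) ⊙ₘ ¬ₘd = y := oplus_odot_mvneg_of_odot_eq_zero (odot_comm d y ▸ hdy)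
  have ha : (a ⊕ₘ d) ⊙ₘ ¬ₘd = a := oplus_odot_mvneg_of_odot_eq_zero (odot_comm d a ▸ hda)
  calc (d ⊕ₘ a) ⊙ₘ y = (a ⊕ₘ d) ⊙ₘ ((y ⊕ₘ d) ⊙ₘ ¬ₘd) := by rw [hy, oplus_comm]
    _ = (a ⊕ₘ d) ⊙ₘ ¬ₘd ⊙ₘ (y ⊕ₘ d) := by rw [odot_comm (y ⊕ₘ d), odot_assoc]
    _ = a ⊙ₘ (d ⊕ₘ y) := by rw [ha, oplus_comm]

theorem oplus_odot_of_odot_oplus_eq_zero {p q r : A} (h : q ⊙ₘ (p ⊕ₘ r) = 0) :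
    (p ⊕ₘ q) ⊙ₘ r = p ⊙ₘ r := by
  have hl := lukasiewicz ¬ₘr p
  rw [mvneg_mvneg, oplus_comm r p] at hl
  have hres : p ⊕ₘ ¬ₘ(p ⊕ₘ r) = ¬ₘr ⊕ₘ p ⊙ₘ r := by
    rw [oplus_comm, hl, oplus_comm, odot]
  refine mvLe_antisymm (odot_mvLe_of_mvLe_mvneg_oplus ?_)
    (odot_mvLe_odot_left (mvLe_oplus_right p q) r)
  exact hres ▸ oplus_mvLe_oplus_right (odot_eq_zero_iff.mp h) p

end MVAlgebra

section GoodSequences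

variable {A : Type*} [MVAlgebra A]

@[simp]
theorem single_zero (a : A) : single a 0 = a := rfl

@[simp]
theorem single_succ (a : A) (n : ℕ) : single a (n + 1) = 0 := rfl

theorem oneSeq_eq_single : oneSeq A = single ¬ₘ0 := rfl

theorem addGood_zeroSeq (a : ℕ → A) : addGood a (zeroSeq A) = a := by
  funext n
  rw [addGood, foldr_oplus_of_forall_eq_zero, zeroSeq, oplus_zero]
  simp only [List.mem_map, forall_exists_index, and_imp]
  rintro _ j - rfl
  exact odot_zero _

theorem zeroSeq_addGood (b : ℕ → A) : addGood (zeroSeq A) b = b := by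
  funext n
  rw [addGood, foldr_oplus_of_forall_eq_zero, zeroSeq, zero_oplus]
  simp only [List.mem_map, forall_exists_index, and_imp]
  rintro _ j - rfl
  exact zero_odot _

theorem addGood_single_succ (a : A) (b : ℕ → A) (n : ℕ) :
    addGood (single a) b (n + 1) = a ⊙ₘ b n ⊕ₘ b (n + 1) := by
  rw [addGood, List.range_succ, List.map_append, List.foldr_append, foldr_oplus_of_forall_eq_zero]
  · simp [zero_oplus]
  · simp only [List.mem_map, List.mem_range, forall_exists_index, and_imp]
    rintro _ j hj rfl
    rw [show n + 1 - 1 - j = (n - 1 - j) + 1 by omega, single_succ, zero_odot]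

theorem addGood_oneSeq_succ (b : ℕ → A) (n : ℕ) :
    addGood (oneSeq A) b (n + 1) = b n ⊕ₘ b (n + 1) := by
  rw [oneSeq_eq_single, addGood_single_succ, mvneg_zero_odot]

theorem succ_mvLe_one_of_oplus_succ {y : ℕ → A} (hy : ∀ i, y i ⊕ₘ y (i + 1) = y i) (n : ℕ) :
    y (n + 1) ≤ₘ y 1 := by
  induction n with
  | zero => exact mvLe_refl _
  | succ n ih => exact mvLe_trans (hy (n + 1) ▸ mvLe_oplus_left _ _) ih

theorem exists_eq_single_add_of_eq_zero (N : ℕ) {x y : ℕ → A}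
    (hx : ∀ i, x i ⊕ₘ x (i + 1) = x i) (hy : ∀ i, y i ⊕ₘ y (i + 1) = y i)
    (hyN : ∀ m, N ≤ m → y m = 0) (hyx : ∀ i, y i ≤ₘ x i) (hxy : ∀ n, x (n + 1) ≤ₘ y n) :
    ∃ a, x 0 = a ⊕ₘ y 0 ∧ ∀ n, x (n + 1) = a ⊙ₘ y n ⊕ₘ y (n + 1) := by
  induction N generalizing x y with
  | zero =>
    refine ⟨x 0, by rw [hyN 0 le_rfl, oplus_zero], fun n => ?_⟩
    have hxn := hxy n
    rw [hyN n n.zero_le] at hxn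
    rw [eq_zero_of_mvLe_zero hxn, hyN n n.zero_le, hyN (n + 1) (n + 1).zero_le, odot_zero,
      oplus_zero]
  | succ N ih =>
    obtain ⟨a, ha0, ha⟩ := ih (fun i => hx (i + 1)) (fun i => hy (i + 1))
      (fun m hm => hyN (m + 1) (by omega)) (fun i => hyx (i + 1)) (fun n => hxy (n + 1))
    set d := x 0 ⊙ₘ ¬ₘ(y 0)
    have hax1 : a ≤ₘ x 1 := ha0 ▸ mvLe_oplus_right a (y 1)
    have hay0 : a ≤ₘ y 0 := mvLe_trans hax1 (hxy 0)
    have hx0a : x 0 ⊕ₘ a = x 0 := oplus_eq_self_of_mvLe (hx 0) hax1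
    have hdy0 : d ⊙ₘ y 0 = 0 := odot_mvneg_odot_self _ _
    have hdy0_oplus : d ⊕ₘ y 0 = x 0 := odot_mvneg_oplus_of_mvLe (hyx 0)
    refine ⟨d ⊕ₘ a, ?_, ?_⟩
    · rw [← oplus_assoc, oplus_comm a, oplus_assoc, hdy0_oplus, hx0a]
    rintro (_ | n)
    · rw [oplus_odot_of_odot_eq_zero (odot_eq_zero_of_mvLe hdy0 hay0) hdy0, hdy0_oplus,
        odot_eq_self_of_oplus_eq_self hx0a, ha0]
    · have hay : a ⊕ₘ y (n + 1) ≤ₘ y 0 :=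
        hy 0 ▸ oplus_mvLe_oplus hay0 (succ_mvLe_one_of_oplus_succ hy n)
      rw [oplus_comm d a, oplus_odot_of_odot_oplus_eq_zero (odot_eq_zero_of_mvLe hdy0 hay)]
      exact ha n

end GoodSequences

section UnitInterval

variable {A : Type*} [MVAlgebra A]

theorem pairLe_zero_single (a : A) : PairLe (zeroSeq A, zeroSeq A) (single a, zeroSeq A) := by
  simp only [PairLe, SeqLe, addGood_zeroSeq]
  exact fun i => zero_mvLe _

theorem pairLe_single_oneSeq (a : A) : PairLe (single a, zeroSeq A) (oneSeq A, zeroSeq A) := by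
  simp only [PairLe, SeqLe, addGood_zeroSeq, oneSeq_eq_single]
  rintro (_ | n)
  · exact mvLe_mvneg_zero a
  · exact zero_mvLe _

theorem eq_of_pairEq_single {a b : A} (h : PairEq (single a, zeroSeq A) (single b, zeroSeq A)) :
    a = b := by
  simpa only [PairEq, addGood_zeroSeq, single_zero] using congrFun h 0

theorem exists_pairEq_single_of_pairLe {p : (ℕ → A) × (ℕ → A)}
    (hp₁ : ∀ i, p.1 i ⊕ₘ p.1 (i + 1) = p.1 i) (hp₂ : Good p.2)
    (h₀ : PairLe (zeroSeq A, zeroSeq A) p) (h₁ : PairLe p (oneSeq A, zeroSeq A)) :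
    ∃ a : A, PairEq p (single a, zeroSeq A) := by
  obtain ⟨hy, N, hyN⟩ := hp₂
  have hyx : ∀ i, p.2 i ≤ₘ p.1 i := by
    simpa only [PairLe, SeqLe, zeroSeq_addGood, addGood_zeroSeq] using h₀
  have hxy (n : ℕ) : p.1 (n + 1) ≤ₘ p.2 n := by
    simpa only [addGood_zeroSeq, addGood_oneSeq_succ, hy n] using h₁ (n + 1)
  obtain ⟨a, ha₀, ha⟩ := exists_eq_single_add_of_eq_zero N hp₁ hy hyN hyx hxy
  refine ⟨a, ?_⟩
  rw [PairEq, addGood_zeroSeq]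
  funext n
  rcases n with _ | n
  · exact ha₀
  · rw [addGood_single_succ]
    exact ha n

theorem pairEq_single_zero : PairEq (single (0 : A), zeroSeq A) (zeroSeq A, zeroSeq A) := by
  rw [PairEq, addGood_zeroSeq, addGood_zeroSeq]
  funext n
  rcases n with _ | n <;> rfl

theorem single_mvneg_addGood_single (a : A) : addGood (single ¬ₘa) (single a) = oneSeq A := by
  funext n
  rcases n with _ | _ | n
  · exact mvneg_oplus_self a
  · rw [addGood_single_succ, single_zero, single_succ, mvneg_odot_self, oplus_zero]
    rfl
  · rw [addGood_single_succ, single_succ, single_succ, odot_zero, oplus_zero]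
    rfl

theorem pairEq_single_mvneg (a : A) :
    PairEq (single ¬ₘa, zeroSeq A)
      (addGood (oneSeq A) (zeroSeq A), addGood (zeroSeq A) (single a)) := by
  simp only [PairEq, addGood_zeroSeq, zeroSeq_addGood]
  exact single_mvneg_addGood_single a

theorem pairEq_single_oplus (a b : A) :
    PairEq (single (a ⊕ₘ b), zeroSeq A)
      (pairInf (oneSeq A, zeroSeq A) (pairAdd (single a, zeroSeq A) (single b, zeroSeq A))) := by
  simp only [PairEq, pairInf, pairAdd, addGood_zeroSeq, oneSeq_eq_single]
  funext n
  rcases n with _ | n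
  · exact (mvInf_eq_right_of_mvLe (mvLe_mvneg_zero _)).symm
  · exact (zero_mvInf _).symm

end UnitInterval

/-- The map `φ_A : a ↦ [(a),(0)]` is an isomorphism of MV-algebras from `A` onto
the unit interval `[0,u]` of the ℓ-group with strong unit `G_A` associated to
`A`, where `u = [(1),(0)]`: it lands in `[0,u]`, it is injective, it is
surjective onto `[0,u]`, and it preserves `0`, `¬` (i.e. `φ(¬a) = u - φ(a)`)
and `⊕` (i.e. `φ(a ⊕ b) = inf(u, φ(a) + φ(b))`). -/
theorem phi_iso (A : Type*) [MVAlgebra A] :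
    (∀ a : A, PairLe ((zeroSeq A, zeroSeq A)) ((single a, zeroSeq A)) ∧
      PairLe ((single a, zeroSeq A)) ((oneSeq A, zeroSeq A))) ∧
    (∀ a b : A,
      PairEq ((single a, zeroSeq A)) ((single b, zeroSeq A)) → a = b) ∧
    (∀ p : (ℕ → A) × (ℕ → A), Good p.1 → Good p.2 →
      PairLe ((zeroSeq A, zeroSeq A)) p → PairLe p ((oneSeq A, zeroSeq A)) →
      ∃ a : A, PairEq p ((single a, zeroSeq A))) ∧
    PairEq ((single (0 : A), zeroSeq A)) ((zeroSeq A, zeroSeq A)) ∧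
    (∀ a : A, PairEq ((single (mvneg a), zeroSeq A))
      ((addGood (oneSeq A) (zeroSeq A), addGood (zeroSeq A) (single a)))) ∧
    (∀ a b : A, PairEq ((single (oplus a b), zeroSeq A))
      (pairInf ((oneSeq A, zeroSeq A))
        (pairAdd ((single a, zeroSeq A)) ((single b, zeroSeq A))))) :=
  ⟨fun a => ⟨pairLe_zero_single a, pairLe_single_oneSeq a⟩,
    fun _ _ => eq_of_pairEq_single,
    fun _ hp₁ hp₂ => exists_pairEq_single_of_pairLe hp₁.1 hp₂,
    pairEq_single_zero, pairEq_single_mvneg, pairEq_single_oplus⟩
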